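/- arXiv:0905.3250 — 3 statements merged into one kernel-verified Lean document; each statement's English description precedes it below -/
import Mathlib

section
/- Assume the θ-setup and additionally that N is even. Then: (a) u and u' = u − v·B are odd, and T ≡ 2·(N−1)·v·u'·(C/(N·p) − A) (mod 8); (b) if moreover 4 divides C, then v·B is even. -/
/-- The odd part of an integer: for `n ≠ 0`, `n = 2 ^ (padicValInt 2 n) * oddPart n`. -/
def oddPart (n : ℤ) : ℤ := n / 2 ^ (padicValInt 2 n)

lemma oddPart_odd (n : ℤ) (hn : n ≠ 0) : Odd (oddPart n) := by
  have hdvd : (2 : ℤ) ^ (padicValInt 2 n) ∣ n := padicValInt_dvd n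
  rw [Int.not_even_iff_odd.symm]
  rintro ⟨t, ht⟩
  unfold oddPart at ht
  have h2 : (2 : ℤ) ^ (padicValInt 2 n + 1) ∣ n := by
    refine ⟨t, ?_⟩
    have hh := Int.ediv_mul_cancel hdvd
    rw [pow_succ]
    linear_combination (-1 : ℤ) * hh + 2 ^ (padicValInt 2 n) * ht
  have h2' : ((2 : ℕ) : ℤ) ^ (padicValInt 2 n + 1) ∣ n := by exact_mod_cast h2
  rw [padicValInt_dvd_iff] at h2'
  rcases h2' with h | h
  · exact hn h
  · omega

/-- In the θ-setup with `N` even: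
(a) `u` and `u' = u − v·B` are odd, and `T ≡ 2·(N−1)·v·u'·(C/(N·p) − A) (mod 8)`;
(b) if moreover `4 ∣ C`, then `v·B` is even. -/
theorem lemma_thetamod4
    (N A B C u v p D Θ T : ℤ)
    (hN : 2 ≤ N) (hA : Int.gcd A N = 1) (hv : v ≠ 0)
    (hp : Prime p) (hp6 : ¬ p ∣ 6 * N)
    (hNC : N ∣ C) (hpC : p ∣ C) (hpu : p ∣ u)
    (hpeq : p = u * (u - v * B) + v ^ 2 * A * C)
    (hD : D = B ^ 2 - 4 * A * C)
    (hΘ : Θ = (N - 1) * v * ((u - v * B) * (C / (N * p)) +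
      A * ((u / p) * (1 - (u - v * B) ^ 2) - (u - v * B))))
    (hT : T = 2 * Θ + 6 * oddPart v * oddPart A * (oddPart N - 1) * ((u - v * B) - 1) +
      3 * (padicValInt 2 N : ℤ) * ((u - v * B) ^ 2 - 1))
    (hNeven : Even N) :
    (Odd u ∧ Odd (u - v * B) ∧
      T ≡ 2 * (N - 1) * v * (u - v * B) * (C / (N * p) - A) [ZMOD 8]) ∧
    (4 ∣ C → Even (v * B)) := by
  -- p is odd
  have hpodd : Odd p := by
    rw [Int.not_even_iff_odd.symm]
    rintro ⟨t, ht⟩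
    exact hp6 (dvd_trans (Int.prime_two.associated_of_dvd hp ⟨t, by omega⟩).symm.dvd
      ⟨3 * N, by ring⟩)
  -- C is even
  have hCeven : (2 : ℤ) ∣ C := dvd_trans hNeven.two_dvd hNC
  -- u * (u - v*B) is odd
  have hmul : Odd (u * (u - v * B)) := by
    have h : u * (u - v * B) = p - v ^ 2 * A * C := by linarith
    rw [h]
    exact hpodd.sub_even (by
      rcases hCeven with ⟨t, ht⟩
      exact ⟨v ^ 2 * A * t, by rw [ht]; ring⟩)
  rw [Int.odd_mul] at hmul
  obtain ⟨hu, hu'⟩ := hmul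
  have hvB : Even (v * B) := by
    have : v * B = u - (u - v * B) := by ring
    rw [this]
    exact hu.sub_odd hu'
  refine ⟨⟨hu, hu', ?_⟩, fun _ => hvB⟩
  -- main congruence
  obtain ⟨k, hk⟩ := hu'
  obtain ⟨j, hj⟩ := Int.even_mul_succ_self k
  have hNodd := oddPart_odd N (by omega)
  obtain ⟨a, ha⟩ := hNodd
  set c := C / (N * p) with hc
  set m := u / p with hm
  set v1 := oddPart v
  set A1 := oddPart A
  set lam := (padicValInt 2 N : ℤ)
  refine Int.ModEq.symm ((Int.modEq_iff_dvd).mpr ?_)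
  refine ⟨3 * v1 * A1 * a * k + 3 * lam * j - 2 * (N - 1) * v * A * m * j, ?_⟩
  rw [hT, hΘ, hk, ha]
  linear_combination (12 * lam - 8 * (N - 1) * v * A * m) * hj
end

section
/- Assume the θ-setup and additionally that N is even and B² ≡ D + 12N (mod 16N). If one of the following conditions is met: (a) D ≡ 1 (mod 8); (b) the 2-adic valuation of D equals 3 and the 2-adic valuation of N equals 1; (c) the 2-adic valuation of D equals 2 and 4 ∣ N; then 8 divides T. Moreover, in case (b) one has 4 ∣ B, and in case (c) one has B ≡ 2 (mod 4). -/
theorem two_pow_padicValInt_mul_oddPart (n : ℤ) : 2 ^ padicValInt 2 n * oddPart n = n :=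
  Int.mul_ediv_cancel' (padicValInt_dvd n)

theorem odd_oddPart {n : ℤ} (hn : n ≠ 0) : Odd (oddPart n) := by
  rw [← Int.not_even_iff_odd]
  rintro ⟨t, ht⟩
  have hdvd : (2 : ℤ) ^ (padicValInt 2 n + 1) ∣ n :=
    ⟨t, by linear_combination -two_pow_padicValInt_mul_oddPart n + 2 ^ padicValInt 2 n * ht⟩
  rcases (padicValInt_dvd_iff _ n).mp hdvd with h | h
  · exact hn h
  · exact Nat.not_succ_le_self _ h

theorem exists_odd_eq_two_pow_mul {n : ℤ} {k : ℕ} (h : padicValInt 2 n = k) (hk : k ≠ 0) :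
    ∃ m, Odd m ∧ n = 2 ^ k * m :=
  ⟨oddPart n, odd_oddPart (by rintro rfl; simp_all), by rw [← h, two_pow_padicValInt_mul_oddPart]⟩

theorem Int.two_mul_modEq_two_of_odd {x : ℤ} (hx : Odd x) : 2 * x ≡ 2 [ZMOD 4] := by
  obtain ⟨k, rfl⟩ := hx
  unfold Int.ModEq
  omega

theorem Int.modEq_two_of_padicValInt_eq_one {n : ℤ} (h : padicValInt 2 n = 1) :
    n ≡ 2 [ZMOD 4] := by
  obtain ⟨m, hm, rfl⟩ := exists_odd_eq_two_pow_mul h one_ne_zero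
  simpa using Int.two_mul_modEq_two_of_odd hm

theorem Int.modEq_two_of_sq_modEq_four {b : ℤ} (h : b ^ 2 ≡ 4 [ZMOD 8]) : b ≡ 2 [ZMOD 4] := by
  have key : ∀ x : ZMod 8, x ^ 2 = 4 → (x.cast : ZMod 4) = 2 := by decide
  have h8 : (b : ZMod 8) ^ 2 = 4 := by exact_mod_cast (ZMod.intCast_eq_intCast_iff _ _ 8).mpr h
  have h4 := key _ h8
  rw [ZMod.cast_intCast (by norm_num)] at h4
  exact (ZMod.intCast_eq_intCast_iff _ 2 4).mp (by exact_mod_cast h4)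

theorem Int.modEq_of_mul_three_mul_modEq_three {a c : ℤ} (h : a * 3 * c ≡ 3 [ZMOD 4]) :
    c ≡ a [ZMOD 4] := by
  have key : ∀ a c : ZMod 4, a * 3 * c = 3 → c = a := by decide
  have h4 : (a : ZMod 4) * 3 * c = 3 := by
    exact_mod_cast (ZMod.intCast_eq_intCast_iff _ _ 4).mpr h
  exact (ZMod.intCast_eq_intCast_iff _ _ 4).mp (key _ _ h4)

theorem odd_of_sq_modEq {B D N : ℤ} (h : B ^ 2 ≡ D + 12 * N [ZMOD 16]) (hD : D ≡ 1 [ZMOD 8]) :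
    Odd B := by
  rw [← Int.odd_pow' two_ne_zero, Int.odd_iff]
  unfold Int.ModEq at h hD
  omega

theorem four_dvd_of_sq_modEq {B D N : ℤ} (h : B ^ 2 ≡ D + 12 * N [ZMOD 16])
    (hD : padicValInt 2 D = 3) (hN : padicValInt 2 N = 1) : 4 ∣ B := by
  obtain ⟨d, ⟨d', rfl⟩, rfl⟩ := exists_odd_eq_two_pow_mul hD three_ne_zero
  obtain ⟨m, ⟨m', rfl⟩, rfl⟩ := exists_odd_eq_two_pow_mul hN one_ne_zero
  have h16 : 16 ∣ B ^ 2 := Int.modEq_zero_iff_dvd.mp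
    (h.trans (Int.modEq_zero_iff_dvd.mpr ⟨d' + 3 * m' + 2, by ring⟩))
  exact (Int.pow_dvd_pow_iff two_ne_zero).mp (by norm_num [h16])

theorem modEq_two_of_sq_modEq {B D N : ℤ} (h : B ^ 2 ≡ D + 12 * N [ZMOD 16])
    (hD : padicValInt 2 D = 2) (hN : 4 ∣ N) : B ≡ 2 [ZMOD 4] := by
  obtain ⟨d, ⟨d', rfl⟩, rfl⟩ := exists_odd_eq_two_pow_mul hD two_ne_zero
  obtain ⟨n, rfl⟩ := hN
  exact Int.modEq_two_of_sq_modEq_four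
    ((h.of_dvd (by norm_num)).trans (Int.modEq_iff_add_fac.mpr ⟨-(d' + 6 * n), by ring⟩))

theorem even_of_odd_of_odd_sub_mul {x v B : ℤ} (hx : Odd x) (hxvB : Odd (x - v * B))
    (hB : Odd B) : Even v := by
  have hvB : Even (v * B) := by simpa using hx.sub_odd hxvB
  exact (Int.even_mul.mp hvB).resolve_right (Int.not_even_iff_odd.mpr hB)

theorem exists_cofactors_mul_add_eq_one {N A B C u v p : ℤ} (hp : Prime p) (hpN : ¬ p ∣ N)
    (hNC : N ∣ C) (hpC : p ∣ C) (hpu : p ∣ u) (hpeq : p = u * (u - v * B) + v ^ 2 * A * C) :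
    ∃ C₀ u₀, C = N * p * C₀ ∧ u = p * u₀ ∧ u₀ * (u - v * B) + v ^ 2 * A * N * C₀ = 1 := by
  obtain ⟨C₀, rfl⟩ := ((hp.coprime_iff_not_dvd).mpr hpN).symm.mul_dvd hNC hpC
  obtain ⟨u₀, rfl⟩ := hpu
  exact ⟨C₀, u₀, rfl, rfl, mul_left_cancel₀ hp.ne_zero (by linear_combination -hpeq)⟩

theorem modEq_three_of_sq_modEq {A B C₀ N p : ℤ} (hN : N ≠ 0)
    (h : B ^ 2 ≡ B ^ 2 - 4 * A * (N * p * C₀) + 12 * N [ZMOD 16 * N]) :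
    A * p * C₀ ≡ 3 [ZMOD 4] := by
  have h' : (4 * N) * 4 ∣ (4 * N) * (3 - A * p * C₀) := by
    convert h.dvd using 1 <;> ring
  exact Int.modEq_iff_dvd.mpr ((mul_dvd_mul_iff_left (by positivity)).mp h')
section

variable {N A B v p u₀ C₀ : ℤ}

theorem four_dvd_mul_sub_of_even_or_modEq_three (hA : Odd A) (hC₀ : Odd C₀)
    (hApC : A * p * C₀ ≡ 3 [ZMOD 4]) (h : Even v ∨ p ≡ 3 [ZMOD 4]) : 4 ∣ v * (C₀ - A) := by
  rcases h with hv | hp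
  · exact mul_dvd_mul hv.two_dvd (hC₀.sub_odd hA).two_dvd
  · have : A * 3 * C₀ ≡ 3 [ZMOD 4] := (Int.ModEq.mul_right C₀ (hp.symm.mul_left A)).trans hApC
    exact dvd_mul_of_dvd_right (Int.modEq_of_mul_three_mul_modEq_three this).symm.dvd v

theorem modEq_three_of_mul_add_eq_one (hu₀ : Odd u₀)
    (hid : u₀ * (p * u₀ - v * B) + v ^ 2 * A * N * C₀ = 1)
    (h : u₀ * v * B - v ^ 2 * A * N * C₀ ≡ 2 [ZMOD 4]) : p ≡ 3 [ZMOD 4] := by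
  have hsq : u₀ ^ 2 ≡ 1 [ZMOD 4] := Int.sq_mod_four_eq_one_of_odd hu₀
  calc p = p * 1 := (mul_one p).symm
    _ ≡ p * u₀ ^ 2 [ZMOD 4] := hsq.symm.mul_left p
    _ = 1 + (u₀ * v * B - v ^ 2 * A * N * C₀) := by linear_combination hid
    _ ≡ 1 + 2 [ZMOD 4] := h.add_left 1

theorem sub_modEq_two_of_four_dvd (hB : 4 ∣ B) (hN : N ≡ 2 [ZMOD 4]) (h : Odd (v ^ 2 * A * C₀)) :
    u₀ * v * B - v ^ 2 * A * N * C₀ ≡ 2 [ZMOD 4] :=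
  calc u₀ * v * B - v ^ 2 * A * N * C₀ ≡ u₀ * v * 0 - v ^ 2 * A * 2 * C₀ [ZMOD 4] := by
        gcongr
        exact Int.modEq_zero_iff_dvd.mpr hB
    _ = -(2 * (v ^ 2 * A * C₀)) := by ring
    _ ≡ -2 [ZMOD 4] := (Int.two_mul_modEq_two_of_odd h).neg
    _ ≡ 2 [ZMOD 4] := by decide

theorem sub_modEq_two_of_modEq_two (hB : B ≡ 2 [ZMOD 4]) (hN : 4 ∣ N) (h : Odd (u₀ * v)) :
    u₀ * v * B - v ^ 2 * A * N * C₀ ≡ 2 [ZMOD 4] :=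
  calc u₀ * v * B - v ^ 2 * A * N * C₀ ≡ u₀ * v * 2 - v ^ 2 * A * 0 * C₀ [ZMOD 4] := by
        gcongr
        exact Int.modEq_zero_iff_dvd.mpr hN
    _ = 2 * (u₀ * v) := by ring
    _ ≡ 2 [ZMOD 4] := Int.two_mul_modEq_two_of_odd h

theorem even_or_modEq_three_of_cases {D : ℤ} (hid : u₀ * (p * u₀ - v * B) + v ^ 2 * A * N * C₀ = 1)
    (hu₀ : Odd u₀) (hu' : Odd (p * u₀ - v * B)) (hp : Odd p) (hA : Odd A) (hC₀ : Odd C₀)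
    (hB : B ^ 2 ≡ D + 12 * N [ZMOD 16])
    (hcase : D ≡ 1 [ZMOD 8] ∨ (padicValInt 2 D = 3 ∧ padicValInt 2 N = 1) ∨
      (padicValInt 2 D = 2 ∧ 4 ∣ N)) :
    Even v ∨ p ≡ 3 [ZMOD 4] := by
  rcases hcase with ha | hb | hc
  · exact .inl (even_of_odd_of_odd_sub_mul (hp.mul hu₀) hu' (odd_of_sq_modEq hB ha))
  · refine (Int.even_or_odd v).imp_right fun hv => modEq_three_of_mul_add_eq_one hu₀ hid ?_
    exact sub_modEq_two_of_four_dvd (four_dvd_of_sq_modEq hB hb.1 hb.2)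
      (Int.modEq_two_of_padicValInt_eq_one hb.2) ((hv.pow.mul hA).mul hC₀)
  · refine (Int.even_or_odd v).imp_right fun hv => modEq_three_of_mul_add_eq_one hu₀ hid ?_
    exact sub_modEq_two_of_modEq_two (modEq_two_of_sq_modEq hB hc.1 hc.2) hc.2 (hu₀.mul hv)

theorem eight_dvd_of_four_dvd_mul_sub {v₁ A₁ N₁ l u' : ℤ} (hu' : Odd u') (hN₁ : Odd N₁)
    (h : 4 ∣ v * (C₀ - A)) :
    8 ∣ 2 * ((N - 1) * v * (u' * C₀ + A * (u₀ * (1 - u' ^ 2) - u'))) +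
      6 * v₁ * A₁ * (N₁ - 1) * (u' - 1) + 3 * l * (u' ^ 2 - 1) := by
  obtain ⟨k, hk⟩ := h
  obtain ⟨e, he⟩ := Int.eight_dvd_sq_sub_one_of_odd hu'
  obtain ⟨f, hf⟩ : 4 ∣ (N₁ - 1) * (u' - 1) :=
    mul_dvd_mul (hN₁.sub_odd odd_one).two_dvd (hu'.sub_odd odd_one).two_dvd
  exact ⟨(N - 1) * u' * k - 2 * (N - 1) * v * A * u₀ * e + 3 * v₁ * A₁ * f + 3 * l * e, by
    linear_combination 2 * (N - 1) * u' * hk - 2 * (N - 1) * v * A * u₀ * he + 6 * v₁ * A₁ * hf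
      + 3 * l * he⟩

end

theorem prop412_general
    (N A B C u v p D Θ T : ℤ)
    (hN : 2 ≤ N)
    (hp : Prime p) (hp6 : ¬ p ∣ 6 * N)
    (hNC : N ∣ C) (hpC : p ∣ C) (hpu : p ∣ u)
    (hpeq : p = u * (u - v * B) + v ^ 2 * A * C)
    (hD : D = B ^ 2 - 4 * A * C)
    (hΘ : Θ = (N - 1) * v * ((u - v * B) * (C / (N * p)) +
      A * ((u / p) * (1 - (u - v * B) ^ 2) - (u - v * B))))
    (hT : T = 2 * Θ + 6 * oddPart v * oddPart A * (oddPart N - 1) * ((u - v * B) - 1) +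
      3 * (padicValInt 2 N : ℤ) * ((u - v * B) ^ 2 - 1))
    (hNeven : Even N)
    (hB : B ^ 2 ≡ D + 12 * N [ZMOD 16 * N]) :
    ((D ≡ 1 [ZMOD 8] ∨ (padicValInt 2 D = 3 ∧ padicValInt 2 N = 1) ∨
        (padicValInt 2 D = 2 ∧ 4 ∣ N)) → 8 ∣ T) ∧
    ((padicValInt 2 D = 3 ∧ padicValInt 2 N = 1) → 4 ∣ B) ∧
    ((padicValInt 2 D = 2 ∧ 4 ∣ N) → B ≡ 2 [ZMOD 4]) := by
  have hN0 : N ≠ 0 := by omega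
  obtain ⟨C₀, u₀, rfl, rfl, hid⟩ :=
    exists_cofactors_mul_add_eq_one hp (fun h => hp6 (h.mul_left 6)) hNC hpC hpu hpeq
  have hApC : A * p * C₀ ≡ 3 [ZMOD 4] := modEq_three_of_sq_modEq hN0 (hD ▸ hB)
  have hApC_odd : Odd (A * p * C₀) := Int.odd_iff.mpr (by unfold Int.ModEq at hApC; omega)
  obtain ⟨hAp, hC₀⟩ := Int.odd_mul.mp hApC_odd
  obtain ⟨hA, hp_odd⟩ := Int.odd_mul.mp hAp
  obtain ⟨hu₀, hu'⟩ : Odd u₀ ∧ Odd (p * u₀ - v * B) := Int.odd_mul.mp <| by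
    rw [show u₀ * (p * u₀ - v * B) = 1 - v ^ 2 * A * N * C₀ by linear_combination hid]
    exact odd_one.sub_even ((hNeven.mul_left _).mul_right _)
  have hB16 : B ^ 2 ≡ D + 12 * N [ZMOD 16] := hB.of_dvd (dvd_mul_right 16 N)
  refine ⟨fun hcase => ?_, fun hb => four_dvd_of_sq_modEq hB16 hb.1 hb.2,
    fun hc => modEq_two_of_sq_modEq hB16 hc.1 hc.2⟩
  rw [hT, hΘ, Int.mul_ediv_cancel_left _ (mul_ne_zero hN0 hp.ne_zero),
    Int.mul_ediv_cancel_left _ hp.ne_zero]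
  exact eight_dvd_of_four_dvd_mul_sub hu' (odd_oddPart hN0)
    (four_dvd_mul_sub_of_even_or_modEq_three hA hC₀ hApC
      (even_or_modEq_three_of_cases hid hu₀ hu' hp_odd hA hC₀ hB16 hcase))

/-- PROP412: in the θ-setup with `N` even and `B² ≡ D + 12N (mod 16N)`, if
(a) `D ≡ 1 (mod 8)`, or (b) `v₂(D) = 3` and `v₂(N) = 1`, or (c) `v₂(D) = 2` and `4 ∣ N`,
then `8 ∣ T`; moreover in case (b) one has `4 ∣ B`, and in case (c) one has
`B ≡ 2 (mod 4)`. -/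
theorem prop412
    (N A B C u v p D Θ T : ℤ)
    (hN : 2 ≤ N) (hA : Int.gcd A N = 1) (hv : v ≠ 0)
    (hp : Prime p) (hp6 : ¬ p ∣ 6 * N)
    (hNC : N ∣ C) (hpC : p ∣ C) (hpu : p ∣ u)
    (hpeq : p = u * (u - v * B) + v ^ 2 * A * C)
    (hD : D = B ^ 2 - 4 * A * C)
    (hΘ : Θ = (N - 1) * v * ((u - v * B) * (C / (N * p)) +
      A * ((u / p) * (1 - (u - v * B) ^ 2) - (u - v * B))))
    (hT : T = 2 * Θ + 6 * oddPart v * oddPart A * (oddPart N - 1) * ((u - v * B) - 1) +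
      3 * (padicValInt 2 N : ℤ) * ((u - v * B) ^ 2 - 1))
    (hNeven : Even N)
    (hB : B ^ 2 ≡ D + 12 * N [ZMOD 16 * N]) :
    ((D ≡ 1 [ZMOD 8] ∨ (padicValInt 2 D = 3 ∧ padicValInt 2 N = 1) ∨
        (padicValInt 2 D = 2 ∧ 4 ∣ N)) → 8 ∣ T) ∧
    ((padicValInt 2 D = 3 ∧ padicValInt 2 N = 1) → 4 ∣ B) ∧
    ((padicValInt 2 D = 2 ∧ 4 ∣ N) → B ≡ 2 [ZMOD 4]) :=
  prop412_general N A B C u v p D Θ T hN hp hp6 hNC hpC hpu hpeq hD hΘ hT hNeven hB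
end

section
/- Let p₁ ≤ p₂ be primes and N = p₁·p₂. Then S(N) = p₂ − p₁. -/
/-! The weight `1 - gcd² / N` is positive only for `gcd = p₁ < p₂`, i.e. for `k = p₁ j` with
`0 < j < p₂`. For these `k`, `m = 1` fails exactly when `p₂ ∣ p₁ j - 1`, and then `m = 2` works
because `2 p₁ j - 1 = 2 (p₁ j - 1) + 1`. As `p₁` is invertible mod `p₂`, this happens for exactly
one `j`, so `Σ μ = p₂` and `S(N) = p₂ (1 - p₁ / p₂)`. -/

/-- `μ(k)`: the least positive integer `m` such that `gcd(m·k − 1, N) = 1`. -/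
noncomputable def mu (N k : ℤ) : ℕ :=
  sInf {m : ℕ | 0 < m ∧ Int.gcd ((m : ℤ) * k - 1) N = 1}

/-- `S(N) = Σ μ(k)·(1 − gcd(k,N)²/N)`, the sum over all `k` with `1 < k < N`,
`gcd(k, N) > 1` and `gcd(k, N)² < N`. -/
noncomputable def weberS (N : ℤ) : ℚ :=
  ∑ k ∈ Finset.Ico (2 : ℤ) N,
    if 1 < Int.gcd k N ∧ ((Int.gcd k N : ℤ)) ^ 2 < N then
      (mu N k : ℚ) * (1 - (Int.gcd k N : ℚ) ^ 2 / (N : ℚ))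
    else 0

open Finset

section Mu

variable {N k : ℤ}

lemma mu_eq_one (h : Int.gcd (k - 1) N = 1) : mu N k = 1 :=
  le_antisymm (Nat.sInf_le ⟨one_pos, by simpa using h⟩)
    (le_csInf ⟨1, one_pos, by simpa using h⟩ fun _ hm => hm.1)

lemma mu_eq_two (h₁ : Int.gcd (k - 1) N ≠ 1) (h₂ : Int.gcd (2 * k - 1) N = 1) : mu N k = 2 :=
  le_antisymm (Nat.sInf_le ⟨two_pos, by exact_mod_cast h₂⟩)
    (le_csInf ⟨2, two_pos, by exact_mod_cast h₂⟩ fun m ⟨hm, hgcd⟩ => by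
      by_contra! hm2
      obtain rfl : m = 1 := by omega
      exact h₁ (by simpa using hgcd))

end Mu

lemma Int.gcd_mul_eq_one_iff_of_prime {p q x : ℤ} (hp : Prime p) (hq : Prime q) :
    Int.gcd x (p * q) = 1 ↔ ¬p ∣ x ∧ ¬q ∣ x := by
  rw [← Int.isCoprime_iff_gcd_eq_one, IsCoprime.mul_right_iff, isCoprime_comm,
    isCoprime_comm (x := x), hp.coprime_iff_not_dvd, hq.coprime_iff_not_dvd]

lemma not_dvd_mul_sub_one {R : Type*} [CommRing R] {p : R} (hp : ¬IsUnit p) (a : R) :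
    ¬p ∣ p * a - 1 :=
  fun h => hp (isUnit_of_dvd_one ((dvd_sub_right (dvd_mul_right p a)).mp h))

lemma mu_mul_mul_eq_ite {p q : ℤ} (hp : Prime p) (hq : Prime q) (j : ℤ) :
    mu (p * q) (p * j) = if q ∣ p * j - 1 then 2 else 1 := by
  split_ifs with h
  · refine mu_eq_two (fun h' => ((Int.gcd_mul_eq_one_iff_of_prime hp hq).mp h').2 h) ?_
    refine (Int.gcd_mul_eq_one_iff_of_prime hp hq).mpr
      ⟨by simpa [mul_left_comm] using not_dvd_mul_sub_one hp.not_isUnit (2 * j), fun h₂ => ?_⟩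
    have : q ∣ 1 := by simpa [mul_sub] using dvd_sub h₂ (dvd_mul_of_dvd_right h 2)
    exact hq.not_isUnit (isUnit_of_dvd_one this)
  · exact mu_eq_one ((Int.gcd_mul_eq_one_iff_of_prime hp hq).mpr
      ⟨not_dvd_mul_sub_one hp.not_isUnit j, h⟩)

lemma filter_Ico_intCast_eq {q : ℕ} [NeZero q] {x : ZMod q} (hx : x ≠ 0) :
    (Ico (1 : ℤ) q).filter (fun j : ℤ => (j : ZMod q) = x) = {(x.val : ℤ)} := by
  ext j
  simp only [mem_filter, mem_Ico, mem_singleton]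
  constructor
  · rintro ⟨⟨hj, hjq⟩, rfl⟩
    rw [ZMod.val_intCast, Int.emod_eq_of_lt (by omega) hjq]
  · rintro rfl
    have := (ZMod.val_ne_zero x).mpr hx
    exact ⟨⟨by omega, by exact_mod_cast ZMod.val_lt x⟩, by simp⟩

lemma card_filter_dvd_mul_sub_one {p q : ℕ} (hq : q.Prime) (hqp : ¬q ∣ p) :
    #((Ico (1 : ℤ) q).filter (fun j => (q : ℤ) ∣ p * j - 1)) = 1 := by
  have := Fact.mk hq
  have hp : (p : ZMod q) ≠ 0 := by rwa [Ne, ZMod.natCast_eq_zero_iff]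
  have hiff (j : ℤ) : (q : ℤ) ∣ p * j - 1 ↔ (j : ZMod q) = (p : ZMod q)⁻¹ := by
    rw [← ZMod.intCast_zmod_eq_zero_iff_dvd, Int.cast_sub, Int.cast_mul, Int.cast_natCast,
      Int.cast_one, sub_eq_zero, mul_comm, mul_eq_one_iff_eq_inv₀ hp]
  simp_rw [hiff]
  rw [filter_Ico_intCast_eq (inv_ne_zero hp), card_singleton]

lemma sum_mu_mul_mul {p q : ℕ} (hp : p.Prime) (hq : q.Prime) (hpq : p ≠ q) :
    ∑ j ∈ Ico (1 : ℤ) q, mu (p * q) (p * j) = q := by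
  have hite (j : ℤ) : mu (p * q) (p * j) = 1 + if (q : ℤ) ∣ p * j - 1 then 1 else 0 := by
    rw [mu_mul_mul_eq_ite (Nat.prime_iff_prime_int.mp hp) (Nat.prime_iff_prime_int.mp hq)]
    split_ifs <;> rfl
  rw [sum_congr rfl fun j _ => hite j, sum_add_distrib, sum_const, sum_boole,
    card_filter_dvd_mul_sub_one hq ((Nat.prime_dvd_prime_iff_eq hq hp).not.mpr (Ne.symm hpq)),
    Int.card_Ico]
  have := hq.one_lt
  simp only [smul_eq_mul, mul_one, Nat.cast_one]
  omega

lemma one_lt_and_sq_lt_mul_iff {p q d : ℕ} (hp : p.Prime) (hq : q.Prime) (hpq : p ≤ q)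
    (hd : d ∣ p * q) : 1 < d ∧ d ^ 2 < p * q ↔ d = p ∧ p < q := by
  obtain ⟨a, b, ha, hb, rfl⟩ := Nat.dvd_mul.mp hd
  have := hp.two_le
  have := hq.two_le
  rcases (Nat.dvd_prime hp).mp ha with rfl | rfl <;>
    rcases (Nat.dvd_prime hq).mp hb with rfl | rfl <;>
    exact ⟨fun ⟨h, h'⟩ => ⟨by nlinarith, by nlinarith⟩,
      fun ⟨h, h'⟩ => ⟨by nlinarith, by nlinarith⟩⟩

lemma Int.gcd_mul_mul_eq_of_lt {p q j : ℤ} (hp : 0 ≤ p) (hq : Prime q) (hj : 0 < j)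
    (hjq : j < q) : Int.gcd (p * j) (p * q) = p := by
  have hcop : Int.gcd j q = 1 := by
    rw [← Int.isCoprime_iff_gcd_eq_one, isCoprime_comm, hq.coprime_iff_not_dvd]
    exact fun h => absurd (Int.le_of_dvd hj h) (by omega)
  rw [Int.gcd_mul_left, hcop, mul_one, Int.natAbs_of_nonneg hp]

lemma filter_Ico_gcd_mul_eq_image {p q : ℕ} (hp : p.Prime) (hq : q.Prime) :
    (Ico (2 : ℤ) (p * q)).filter (fun k => Int.gcd k (p * q) = p) =
      (Ico (1 : ℤ) q).image ((p : ℤ) * ·) := by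
  have := hp.two_le
  ext k
  simp only [mem_filter, mem_Ico, mem_image]
  constructor
  · rintro ⟨⟨hk, hkN⟩, hg⟩
    obtain ⟨j, rfl⟩ : (p : ℤ) ∣ k := by exact_mod_cast hg ▸ Int.gcd_dvd_left k (p * q)
    exact ⟨j, ⟨by nlinarith, by nlinarith⟩, rfl⟩
  · rintro ⟨j, ⟨hj, hjq⟩, rfl⟩
    refine ⟨⟨by nlinarith, by nlinarith⟩, ?_⟩
    exact_mod_cast Int.gcd_mul_mul_eq_of_lt (p := p) (by positivity)
      (Nat.prime_iff_prime_int.mp hq) hj hjq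

lemma one_lt_gcd_and_gcd_sq_lt_mul_iff {p q : ℕ} (hp : p.Prime) (hq : q.Prime) (hpq : p ≤ q)
    (k : ℤ) :
    (1 < Int.gcd k (p * q) ∧ ((Int.gcd k (p * q) : ℤ)) ^ 2 < p * q) ↔
      Int.gcd k (p * q) = p ∧ p < q := by
  have hd : Int.gcd k (p * q) ∣ p * q := by
    exact_mod_cast Int.gcd_dvd_right k ((p : ℤ) * q)
  exact_mod_cast one_lt_and_sq_lt_mul_iff hp hq hpq hd

lemma weberS_mul_self {p : ℕ} (hp : p.Prime) : weberS ((p : ℤ) * p) = 0 :=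
  sum_eq_zero fun k _ => if_neg fun h =>
    lt_irrefl p ((one_lt_gcd_and_gcd_sq_lt_mul_iff hp hp le_rfl k).mp h).2

lemma weberS_mul_of_lt {p q : ℕ} (hp : p.Prime) (hq : q.Prime) (hpq : p < q) :
    weberS ((p : ℤ) * q) = q - p := by
  have hcond (k : ℤ) :=
    (one_lt_gcd_and_gcd_sq_lt_mul_iff hp hq hpq.le k).trans (and_iff_left hpq)
  unfold weberS
  simp only [hcond]
  rw [← sum_filter, filter_Ico_gcd_mul_eq_image hp hq, sum_image fun _ _ _ _ h => by
    simpa [hp.ne_zero] using h]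
  have hgcd (j : ℤ) (hj : j ∈ Ico (1 : ℤ) q) : Int.gcd (p * j) (p * q) = p := by
    rw [mem_Ico] at hj
    exact_mod_cast Int.gcd_mul_mul_eq_of_lt (p := p) (by positivity)
      (Nat.prime_iff_prime_int.mp hq) (by omega) hj.2
  rw [sum_congr rfl fun j hj => by rw [hgcd j hj], ← sum_mul, ← Nat.cast_sum,
    sum_mu_mul_mul hp hq hpq.ne]
  have : (p : ℚ) ≠ 0 := by exact_mod_cast hp.ne_zero
  have : (q : ℚ) ≠ 0 := by exact_mod_cast hq.ne_zero
  push_cast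
  field_simp

/-- For `N = p₁·p₂` a product of two primes `p₁ ≤ p₂`, `S(N) = p₂ − p₁`. -/
theorem weberS_two_primes (p₁ p₂ : ℕ) (h₁ : p₁.Prime) (h₂ : p₂.Prime)
    (hle : p₁ ≤ p₂) :
    weberS ((p₁ : ℤ) * (p₂ : ℤ)) = (p₂ : ℚ) - (p₁ : ℚ) := by
  rcases hle.eq_or_lt with rfl | hlt
  · rw [weberS_mul_self h₁, sub_self]
  · exact weberS_mul_of_lt h₁ h₂ hlt
end
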